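/- arXiv:math/0303373 — 12 statements merged into one kernel-verified Lean document; each statement's English description precedes it below -/
import Mathlib

section
/- Let n ≥ 1, let U ⊆ ℝⁿ be open, and let W be an arbitrary map assigning to every smooth vector field X : ℝⁿ → ℝⁿ a function W X : U → Matrix n ℝ (the components of an S-derivation D_X along X in the standard frame). Suppose there exists a smooth map A : U → Matrix n ℝ with A x invertible for all x ∈ U such that for every smooth X and every x ∈ U one has (W X x)·(A x) + fderiv ℝ A x (X x) = 0 (i.e. the components of D_X vanish on U in the frame determined by A, for every X). Then, setting Γ_k x := −(∂_k A x)·(A x)⁻¹, for every smooth vector field X and every x ∈ U one has W X x = Σ_k (X x k) • Γ_k x; moreover Γ is curvature-free on U: ∂_k Γ_l − ∂_l Γ_k + Γ_k·Γ_l − Γ_l·Γ_k = 0 on U. (If the components of an S-derivation along every vector field vanish in some frame on a neighborhood, then the S-derivation is a flat linear connection there.) -/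
attribute [local instance] Matrix.normedAddCommGroup Matrix.normedSpace

namespace FlatAux

variable {n : ℕ}


noncomputable def entryCLM (i j : Fin n) : Matrix (Fin n) (Fin n) ℝ →L[ℝ] ℝ :=
  LinearMap.toContinuousLinearMap
    { toFun := fun M => M i j
      map_add' := fun _ _ => rfl
      map_smul' := fun _ _ => rfl }

lemma differentiable_entry (i j : Fin n) :
    Differentiable ℝ fun M : Matrix (Fin n) (Fin n) ℝ => M i j :=
  (entryCLM i j).differentiable

lemma differentiable_fprod {E : Type*} [NormedAddCommGroup E] [NormedSpace ℝ E]
    {ι : Type*} (u : Finset ι) (f : ι → E → ℝ) (h : ∀ i ∈ u, Differentiable ℝ (f i)) :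
    Differentiable ℝ (fun x => ∏ i ∈ u, f i x) := by
  classical
  induction u using Finset.induction_on with
  | empty => simpa using differentiable_const (1 : ℝ)
  | insert _ _ hx ih =>
    simp only [Finset.prod_insert hx]
    exact (h _ (Finset.mem_insert_self _ _)).mul
      (ih fun i hi => h i (Finset.mem_insert_of_mem hi))

lemma differentiable_updateRow_det (j : Fin n) (c : Fin n → ℝ) :
    Differentiable ℝ fun M : Matrix (Fin n) (Fin n) ℝ => (M.updateRow j c).det := by
  have : (fun M : Matrix (Fin n) (Fin n) ℝ => (M.updateRow j c).det)
      = fun M => ∑ σ : Equiv.Perm (Fin n),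
          ((Equiv.Perm.sign σ : ℤ) : ℝ) * ∏ a, (if σ a = j then c a else M (σ a) a) := by
    funext M
    rw [Matrix.det_apply']
    refine Finset.sum_congr rfl fun σ _ => ?_
    congr 1
    refine Finset.prod_congr rfl fun a _ => ?_
    rw [Matrix.updateRow_apply]
  rw [this]
  refine Differentiable.fun_sum fun σ _ => Differentiable.const_mul ?_ _
  refine differentiable_fprod _ _ fun a _ => ?_
  by_cases h : σ a = j <;> simp [h]
  exact differentiable_entry _ _

lemma differentiable_det :
    Differentiable ℝ fun M : Matrix (Fin n) (Fin n) ℝ => M.det := by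
  have : (fun M : Matrix (Fin n) (Fin n) ℝ => M.det)
      = fun M => ∑ σ : Equiv.Perm (Fin n),
          ((Equiv.Perm.sign σ : ℤ) : ℝ) * ∏ a, M (σ a) a := by
    funext M; rw [Matrix.det_apply']
  rw [this]
  refine Differentiable.fun_sum fun σ _ => Differentiable.const_mul ?_ _
  exact differentiable_fprod _ _ fun a _ => differentiable_entry _ _

lemma differentiable_matrix_of_entries {E : Type*} [NormedAddCommGroup E] [NormedSpace ℝ E]
    {F : E → Matrix (Fin n) (Fin n) ℝ}
    (h : ∀ i j, Differentiable ℝ fun y => F y i j) : Differentiable ℝ F :=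
  differentiable_pi.2 fun i => differentiable_pi.2 fun j => h i j

lemma differentiable_adjugate :
    Differentiable ℝ fun M : Matrix (Fin n) (Fin n) ℝ => M.adjugate := by
  refine differentiable_matrix_of_entries fun i j => ?_
  have : (fun M : Matrix (Fin n) (Fin n) ℝ => M.adjugate i j)
      = fun M => (M.updateRow j (Pi.single i 1)).det := by
    funext M; rw [Matrix.adjugate_apply]
  rw [this]
  exact differentiable_updateRow_det _ _

noncomputable def mulL (n : ℕ) :
    Matrix (Fin n) (Fin n) ℝ →L[ℝ] Matrix (Fin n) (Fin n) ℝ →L[ℝ] Matrix (Fin n) (Fin n) ℝ :=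
  LinearMap.toContinuousLinearMap
    { toFun := fun M => LinearMap.toContinuousLinearMap
        { toFun := fun N => M * N
          map_add' := fun N N' => mul_add M N N'
          map_smul' := fun r N => by simp [mul_smul_comm] }
      map_add' := fun M M' => by
        apply ContinuousLinearMap.ext; intro N
        simp [add_mul]
      map_smul' := fun r M => by
        apply ContinuousLinearMap.ext; intro N
        simp [smul_mul_assoc] }

@[simp] lemma mulL_apply (M N : Matrix (Fin n) (Fin n) ℝ) : mulL n M N = M * N := rfl

lemma hasFDerivAt_matmul {E : Type*} [NormedAddCommGroup E] [NormedSpace ℝ E]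
    {f g : E → Matrix (Fin n) (Fin n) ℝ} {f' g' : E →L[ℝ] Matrix (Fin n) (Fin n) ℝ} {x : E}
    (hf : HasFDerivAt f f' x) (hg : HasFDerivAt g g' x) :
    HasFDerivAt (fun y => f y * g y)
      (((mulL n (f x)).comp g')
        + ((id (α := Matrix (Fin n) (Fin n) ℝ →L[ℝ] Matrix (Fin n) (Fin n) ℝ) ((mulL n).flip (g x))).comp f')) x := by
  have h := ((mulL n).isBoundedBilinearMap.hasFDerivAt (f x, g x)).comp x (hf.prodMk hg)
  convert h using 1
  all_goals rfl

lemma fderiv_matmul {E : Type*} [NormedAddCommGroup E] [NormedSpace ℝ E]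
    {f g : E → Matrix (Fin n) (Fin n) ℝ} {x : E} (v : E)
    (hf : DifferentiableAt ℝ f x) (hg : DifferentiableAt ℝ g x) :
    fderiv ℝ (fun y => f y * g y) x v = f x * fderiv ℝ g x v + fderiv ℝ f x v * g x := by
  rw [(hasFDerivAt_matmul hf.hasFDerivAt hg.hasFDerivAt).fderiv]
  simp [id]
  rfl

end FlatAux

open FlatAux in
/-- If the components `W X` of an S-derivation along every smooth vector field `X` vanish on an
open set `U` in the frame determined by a smooth invertible matrix function `A`
(i.e. `(W X)·A + X(A) = 0` on `U` for every smooth `X`), then the S-derivation is a linear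
connection on `U`, with component matrices `Γ k = -(∂ₖ A)·A⁻¹`, and this connection is flat
(curvature free) on `U`. -/


theorem sderivation_vanishing_frame_is_flat_connection
    (n : ℕ) (hn : 1 ≤ n) (U : Set (Fin n → ℝ)) (hU : IsOpen U)
    (W : ((Fin n → ℝ) → (Fin n → ℝ)) → (Fin n → ℝ) → Matrix (Fin n) (Fin n) ℝ)
    (A : (Fin n → ℝ) → Matrix (Fin n) (Fin n) ℝ)
    (hA : ContDiffOn ℝ (⊤ : ℕ∞) A U)
    (hAunit : ∀ x ∈ U, IsUnit (A x))
    (hvanish : ∀ X : (Fin n → ℝ) → (Fin n → ℝ), ContDiff ℝ (⊤ : ℕ∞) X →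
      ∀ x ∈ U, W X x * A x + fderiv ℝ A x (X x) = 0)
    (Γ : Fin n → (Fin n → ℝ) → Matrix (Fin n) (Fin n) ℝ)
    (hΓdef : Γ = fun k x => -(fderiv ℝ A x (Pi.single k 1)) * (A x)⁻¹) :
    (∀ X : (Fin n → ℝ) → (Fin n → ℝ), ContDiff ℝ (⊤ : ℕ∞) X →
      ∀ x ∈ U, W X x = ∑ k, X x k • Γ k x) ∧
    (∀ k l, ∀ x ∈ U,
      fderiv ℝ (Γ l) x (Pi.single k 1) - fderiv ℝ (Γ k) x (Pi.single l 1)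
        + Γ k x * Γ l x - Γ l x * Γ k x = 0) := by
  -- preliminary facts at points of U
  have hdet : ∀ x ∈ U, IsUnit (A x).det :=
    fun x hx => (Matrix.isUnit_iff_isUnit_det _).1 (hAunit x hx)
  have hAd : ∀ x ∈ U, DifferentiableAt ℝ A x := fun x hx =>
    (hA.contDiffAt (hU.mem_nhds hx)).differentiableAt (by simp)
  -- differentiability of the inverse
  have hBre : (fun y => (A y)⁻¹) = fun y => ((A y).det)⁻¹ • (A y).adjugate := by
    funext y; rw [Matrix.inv_def, Ring.inverse_eq_inv']
  have hBdiff : ∀ x ∈ U, DifferentiableAt ℝ (fun y => (A y)⁻¹) x := by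
    intro x hx
    rw [hBre]
    have h1 : DifferentiableAt ℝ (fun y => (A y).det) x :=
      (differentiable_det.differentiableAt).comp x (hAd x hx)
    have h2 : DifferentiableAt ℝ (fun y => (A y).adjugate) x :=
      (differentiable_adjugate.differentiableAt).comp x (hAd x hx)
    exact (h1.inv (hdet x hx).ne_zero).smul h2
  -- derivative of the inverse
  have hBder : ∀ x ∈ U, ∀ v, fderiv ℝ (fun y => (A y)⁻¹) x v
      = -((A x)⁻¹ * fderiv ℝ A x v * (A x)⁻¹) := by
    intro x hx v
    have hev : (fun y => A y * (A y)⁻¹) =ᶠ[nhds x] (fun _ => (1 : Matrix (Fin n) (Fin n) ℝ)) := by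
      filter_upwards [hU.mem_nhds hx] with y hy
      exact Matrix.mul_nonsing_inv _ (hdet y hy)
    have h0 : fderiv ℝ (fun y => A y * (A y)⁻¹) x = 0 := by
      rw [hev.fderiv_eq]; exact fderiv_const_apply _
    have h1 := fderiv_matmul v (hAd x hx) (hBdiff x hx)
    rw [h0] at h1
    have h2 : A x * fderiv ℝ (fun y => (A y)⁻¹) x v = -(fderiv ℝ A x v * (A x)⁻¹) := by
      have := h1.symm
      simp only [ContinuousLinearMap.zero_apply] at this
      linear_combination (norm := noncomm_ring) this
    calc fderiv ℝ (fun y => (A y)⁻¹) x v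
        = ((A x)⁻¹ * A x) * fderiv ℝ (fun y => (A y)⁻¹) x v := by
          rw [Matrix.nonsing_inv_mul _ (hdet x hx), one_mul]
      _ = (A x)⁻¹ * (A x * fderiv ℝ (fun y => (A y)⁻¹) x v) := by rw [mul_assoc]
      _ = -((A x)⁻¹ * fderiv ℝ A x v * (A x)⁻¹) := by rw [h2]; noncomm_ring
  constructor
  · -- linear connection part
    intro X hX x hx
    have hsum : X x = ∑ k, X x k • (Pi.single k 1 : Fin n → ℝ) := by
      conv_lhs => rw [← Finset.univ_sum_single (X x)]
      refine Finset.sum_congr rfl fun k _ => ?_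
      rw [← Pi.single_smul, smul_eq_mul, mul_one]
    have hfd : fderiv ℝ A x (X x) = ∑ k, X x k • fderiv ℝ A x (Pi.single k 1) := by
      conv_lhs => rw [hsum]
      simp
    have h1 : W X x * A x = -(fderiv ℝ A x (X x)) :=
      eq_neg_of_add_eq_zero_left (hvanish X hX x hx)
    have hW : W X x = -(fderiv ℝ A x (X x)) * (A x)⁻¹ := by
      calc W X x = W X x * (A x * (A x)⁻¹) := by
            rw [Matrix.mul_nonsing_inv _ (hdet x hx), mul_one]
        _ = (W X x * A x) * (A x)⁻¹ := (mul_assoc _ _ _).symm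
        _ = -(fderiv ℝ A x (X x)) * (A x)⁻¹ := by rw [h1]
    simp only [hΓdef]
    rw [hW, hfd, neg_mul, Finset.sum_mul, ← Finset.sum_neg_distrib]
    refine Finset.sum_congr rfl fun k _ => ?_
    rw [smul_mul_assoc, ← smul_neg, neg_mul]
  · -- flatness part
    intro k l x hx
    letI : NormedAddCommGroup ((Fin n → ℝ) →L[ℝ] Matrix (Fin n) (Fin n) ℝ) :=
      ContinuousLinearMap.toNormedAddCommGroup
    letI : NormedSpace ℝ ((Fin n → ℝ) →L[ℝ] Matrix (Fin n) (Fin n) ℝ) :=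
      ContinuousLinearMap.toNormedSpace
    have hA1cd : ContDiffAt ℝ (⊤ : ℕ∞) (fderiv ℝ A) x :=
      (hA.contDiffAt (hU.mem_nhds hx)).fderiv_right (by simp)
    have hA1d : DifferentiableAt ℝ (fderiv ℝ A) x := hA1cd.differentiableAt (by simp)
    have hP : ∀ m : Fin n, DifferentiableAt ℝ (fun y => fderiv ℝ A y (Pi.single m 1)) x :=
      fun m => hA1d.clm_apply (differentiableAt_const _)
    have hPd : ∀ (m : Fin n) (v : Fin n → ℝ),
        fderiv ℝ (fun y => fderiv ℝ A y (Pi.single m 1)) x v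
          = fderiv ℝ (fderiv ℝ A) x v (Pi.single m 1) := by
      intro m v
      have h := fderiv_clm_apply (u := fun _ : Fin n → ℝ => (Pi.single m 1 : Fin n → ℝ)) hA1d
        (differentiableAt_const _)
      have h2 := congrArg (fun L => L v) h
      simp at h2
      erw [ContinuousLinearMap.comp_apply, ContinuousLinearMap.zero_apply, map_zero, zero_add] at h2
      exact h2
    have hsym : fderiv ℝ (fderiv ℝ A) x (Pi.single k 1) (Pi.single l 1)
        = fderiv ℝ (fderiv ℝ A) x (Pi.single l 1) (Pi.single k 1) :=
      ((hA.contDiffAt (hU.mem_nhds hx)).isSymmSndFDerivAt (by rw [minSmoothness_of_isRCLikeNormedField]; exact WithTop.coe_le_coe.mpr le_top)).eq _ _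
    -- derivative of Γ m in direction v
    have hΓder : ∀ (m : Fin n) (v : Fin n → ℝ),
        fderiv ℝ (Γ m) x v
          = (-(fderiv ℝ A x (Pi.single m 1))) * (-((A x)⁻¹ * fderiv ℝ A x v * (A x)⁻¹))
            + (-(fderiv ℝ (fderiv ℝ A) x v (Pi.single m 1))) * (A x)⁻¹ := by
      intro m v
      have : Γ m = fun y => (fun y => -(fderiv ℝ A y (Pi.single m 1))) y * (fun y => (A y)⁻¹) y := by
        simp only [hΓdef]
      rw [this, fderiv_matmul (f := fun y => -(fderiv ℝ A y (Pi.single m 1))) v ((hP m).neg) (hBdiff x hx),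
        hBder x hx v]
      have hneg : fderiv ℝ (fun y => -(fderiv ℝ A y (Pi.single m 1))) x v
          = -(fderiv ℝ (fderiv ℝ A) x v (Pi.single m 1)) := by
        have h := fderiv_fun_neg (𝕜 := ℝ) (f := fun y => fderiv ℝ A y (Pi.single m 1)) (x := x)
        have h2 := congrArg (fun L => L v) h
        simp only [ContinuousLinearMap.neg_apply] at h2
        rw [← hPd m v]
        exact h2
      erw [hneg]
    erw [hΓder l (Pi.single k 1), hΓder k (Pi.single l 1), hsym]
    simp only [hΓdef]
    noncomm_ring
end

section
/- Let n ≥ 1, let U ⊆ ℝⁿ be open and connected, let Γ : Fin n → (U → Matrix n ℝ) be smooth, and let A, A' : U → Matrix n ℝ both be smooth with all values invertible and satisfy ∂_k A = −Γ_k·A and ∂_k A' = −Γ_k·A' on U for all k. Then there exists a constant invertible matrix C ∈ Matrix n ℝ with A' x = (A x)·C for all x ∈ U. (All local frames in which the components of a flat linear connection vanish in a neighborhood are obtained from one another by linear transformations with constant coefficients.) -/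
attribute [local instance] Matrix.normedAddCommGroup Matrix.normedSpace

namespace ParallelFramesAux

noncomputable section

/-- Type synonym for square matrices carrying the `L∞`-operator-norm ring structure. -/
def MatR (n : ℕ) : Type := Matrix (Fin n) (Fin n) ℝ

noncomputable instance (n : ℕ) : NormedRing (MatR n) := Matrix.linftyOpNormedRing
noncomputable instance (n : ℕ) : NormedAlgebra ℝ (MatR n) := Matrix.linftyOpNormedAlgebra

instance (n : ℕ) : FiniteDimensional ℝ (MatR n) :=
  inferInstanceAs (FiniteDimensional ℝ (Matrix (Fin n) (Fin n) ℝ))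

instance (n : ℕ) : CompleteSpace (MatR n) := FiniteDimensional.complete ℝ _

/-- The identity, as a linear equivalence between the two normed structures. -/
def eR (n : ℕ) : Matrix (Fin n) (Fin n) ℝ ≃ₗ[ℝ] MatR n where
  toFun x := x
  invFun x := x
  map_add' _ _ := rfl
  map_smul' _ _ := rfl
  left_inv _ := rfl
  right_inv _ := rfl

noncomputable def eC (n : ℕ) : Matrix (Fin n) (Fin n) ℝ ≃L[ℝ] MatR n :=
  (eR n).toContinuousLinearEquiv

@[simp] lemma eC_apply (n : ℕ) (M : Matrix (Fin n) (Fin n) ℝ) : eC n M = M := rfl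
@[simp] lemma eC_symm_apply (n : ℕ) (M : MatR n) :
    (eC n).symm M = (M : Matrix (Fin n) (Fin n) ℝ) := rfl

/-- Differentiability of the matrix inverse along a differentiable family of invertible
matrices, for the sup norm. -/
theorem differentiableAt_inv {n : ℕ} {f : (Fin n → ℝ) → Matrix (Fin n) (Fin n) ℝ}
    {x : Fin n → ℝ} (hf : DifferentiableAt ℝ f x) (hu : IsUnit (f x)) :
    DifferentiableAt ℝ (fun y => (f y)⁻¹) x := by
  have hu' : IsUnit (f x : MatR n) := hu
  have h1 : DifferentiableAt ℝ (fun y => (eC n).symm (Ring.inverse (eC n (f y)))) x := by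
    exact ((eC n).symm.differentiableAt).comp x
      (((differentiableAt_inverse (𝕜 := ℝ) (R := MatR n) hu').comp x ((eC n).differentiableAt.comp x hf)))
  have heq : (fun y => (f y)⁻¹) = fun y => (eC n).symm (Ring.inverse (eC n (f y))) := by
    funext y
    simp only [eC_apply, eC_symm_apply]
    exact (Matrix.nonsing_inv_eq_ringInverse (f y))
  rw [heq]
  exact h1

/-- Matrix multiplication as a continuous bilinear map, for the sup norm. -/
noncomputable def mulCLM (n : ℕ) : Matrix (Fin n) (Fin n) ℝ →L[ℝ]
    Matrix (Fin n) (Fin n) ℝ →L[ℝ] Matrix (Fin n) (Fin n) ℝ :=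
  LinearMap.toContinuousLinearMap
    { toFun := fun a => LinearMap.toContinuousLinearMap (LinearMap.mul ℝ _ a)
      map_add' := by
        intro a b
        ext m
        simp [add_mul]
      map_smul' := by
        intro c a
        ext m
        simp [Matrix.smul_mul] }

@[simp] lemma mulCLM_apply (n : ℕ) (a b : Matrix (Fin n) (Fin n) ℝ) :
    mulCLM n a b = a * b := rfl

/-- Leibniz rule for products of matrix-valued maps, in terms of `HasFDerivAt`. -/
theorem hasFDerivAt_mul {n : ℕ} {f g : (Fin n → ℝ) → Matrix (Fin n) (Fin n) ℝ}
    {f' g' : (Fin n → ℝ) →L[ℝ] Matrix (Fin n) (Fin n) ℝ} {x : Fin n → ℝ}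
    (hf : HasFDerivAt f f' x) (hg : HasFDerivAt g g' x) :
    HasFDerivAt (fun y => f y * g y)
      ((mulCLM n).precompR ((Fin n) → ℝ) (f x) g' +
        (mulCLM n).precompL ((Fin n) → ℝ) f' (g x)) x := by
  exact (mulCLM n).hasFDerivAt_of_bilinear hf hg

end

end ParallelFramesAux

open ParallelFramesAux

/-- All parallel frames of a flat linear connection on a connected open set are obtained from one
another by a linear transformation with constant coefficients: if `A` and `A'` are smooth,
everywhere invertible, and both satisfy `∂ₖ A = -(Γ k)·A` on `U`, then `A' = A·C` for a constant
invertible matrix `C`. -/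
theorem parallel_frames_differ_by_constant_matrix
    (n : ℕ) (hn : 1 ≤ n) (U : Set (Fin n → ℝ)) (hU : IsOpen U)
    (hconn : IsConnected U)
    (Γ : Fin n → (Fin n → ℝ) → Matrix (Fin n) (Fin n) ℝ)
    (hΓ : ∀ k, ContDiffOn ℝ (⊤ : ℕ∞) (Γ k) U)
    (A A' : (Fin n → ℝ) → Matrix (Fin n) (Fin n) ℝ)
    (hA : ContDiffOn ℝ (⊤ : ℕ∞) A U) (hA' : ContDiffOn ℝ (⊤ : ℕ∞) A' U)
    (hAunit : ∀ x ∈ U, IsUnit (A x)) (hA'unit : ∀ x ∈ U, IsUnit (A' x))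
    (hpar : ∀ x ∈ U, ∀ k, fderiv ℝ A x (Pi.single k 1) = -(Γ k x * A x))
    (hpar' : ∀ x ∈ U, ∀ k, fderiv ℝ A' x (Pi.single k 1) = -(Γ k x * A' x)) :
    ∃ C : Matrix (Fin n) (Fin n) ℝ, IsUnit C ∧ ∀ x ∈ U, A' x = A x * C := by
  classical
  -- the candidate "transition matrix" function
  set F : (Fin n → ℝ) → Matrix (Fin n) (Fin n) ℝ := fun y => (A y)⁻¹ * A' y with hF
  -- basic differentiability facts
  have hdA : ∀ x ∈ U, DifferentiableAt ℝ A x := fun x hx =>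
    (hA.contDiffAt (hU.mem_nhds hx)).differentiableAt (by simp)
  have hdA' : ∀ x ∈ U, DifferentiableAt ℝ A' x := fun x hx =>
    (hA'.contDiffAt (hU.mem_nhds hx)).differentiableAt (by simp)
  have hdiA : ∀ x ∈ U, DifferentiableAt ℝ (fun y => (A y)⁻¹) x := fun x hx =>
    differentiableAt_inv (hdA x hx) (hAunit x hx)
  have hdF : ∀ x ∈ U, DifferentiableAt ℝ F x := fun x hx =>
    (hasFDerivAt_mul (hdiA x hx).hasFDerivAt (hdA' x hx).hasFDerivAt).differentiableAt
  -- the derivative of the inverse frame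
  have hkey : ∀ x ∈ U, ∀ k,
      fderiv ℝ (fun y => (A y)⁻¹) x (Pi.single k 1) = (A x)⁻¹ * Γ k x := by
    intro x hx k
    have hdet : IsUnit (A x).det := (Matrix.isUnit_iff_isUnit_det _).1 (hAunit x hx)
    have hprod : HasFDerivAt (fun y => (A y)⁻¹ * A y)
        ((mulCLM n).precompR (Fin n → ℝ) ((A x)⁻¹) (fderiv ℝ A x) +
          (mulCLM n).precompL (Fin n → ℝ) (fderiv ℝ (fun y => (A y)⁻¹) x) (A x)) x :=
      hasFDerivAt_mul (hdiA x hx).hasFDerivAt (hdA x hx).hasFDerivAt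
    have hev : (fun y => (A y)⁻¹ * A y) =ᶠ[nhds x]
        fun _ => (1 : Matrix (Fin n) (Fin n) ℝ) := by
      filter_upwards [hU.mem_nhds hx] with y hy
      exact Matrix.nonsing_inv_mul _ ((Matrix.isUnit_iff_isUnit_det _).1 (hAunit y hy))
    have h0 : ((mulCLM n).precompR (Fin n → ℝ) ((A x)⁻¹) (fderiv ℝ A x) +
          (mulCLM n).precompL (Fin n → ℝ) (fderiv ℝ (fun y => (A y)⁻¹) x) (A x)) = 0 := by
      refine hprod.fderiv.symm.trans ?_
      exact (Filter.EventuallyEq.fderiv_eq hev).trans (fderiv_const_apply 1)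
    have h1 := congrArg (fun L : (Fin n → ℝ) →L[ℝ] Matrix (Fin n) (Fin n) ℝ =>
      L (Pi.single k 1)) h0
    change (A x)⁻¹ * fderiv ℝ A x (Pi.single k 1) +
      fderiv ℝ (fun y => (A y)⁻¹) x (Pi.single k 1) * A x = 0 at h1
    rw [hpar x hx k] at h1
    set D := fderiv ℝ (fun y => (A y)⁻¹) x (Pi.single k 1) with hD
    have h2 : D * A x = ((A x)⁻¹ * Γ k x) * A x := by
      have h4 := eq_neg_of_add_eq_zero_right h1
      rw [h4]
      simp only [mul_neg, neg_neg, mul_assoc]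
    calc D = D * A x * (A x)⁻¹ := (Matrix.mul_nonsing_inv_cancel_right _ _ hdet).symm
      _ = ((A x)⁻¹ * Γ k x) * A x * (A x)⁻¹ := by rw [h2]
      _ = (A x)⁻¹ * Γ k x := Matrix.mul_nonsing_inv_cancel_right _ _ hdet
  -- `F` has vanishing derivative on `U`
  have hF0 : ∀ x ∈ U, fderiv ℝ F x = 0 := by
    intro x hx
    have hprod : HasFDerivAt F
        ((mulCLM n).precompR (Fin n → ℝ) ((A x)⁻¹) (fderiv ℝ A' x) +
          (mulCLM n).precompL (Fin n → ℝ) (fderiv ℝ (fun y => (A y)⁻¹) x) (A' x)) x :=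
      hasFDerivAt_mul (hdiA x hx).hasFDerivAt (hdA' x hx).hasFDerivAt
    refine hprod.fderiv.trans ?_
    refine ContinuousLinearMap.ext fun v => ?_
    have hsingle : ∀ k, ((mulCLM n).precompR (Fin n → ℝ) ((A x)⁻¹) (fderiv ℝ A' x) +
        (mulCLM n).precompL (Fin n → ℝ) (fderiv ℝ (fun y => (A y)⁻¹) x) (A' x))
          (Pi.single k 1) = 0 := by
      intro k
      change (A x)⁻¹ * fderiv ℝ A' x (Pi.single k 1) +
        fderiv ℝ (fun y => (A y)⁻¹) x (Pi.single k 1) * A' x = 0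
      rw [hpar' x hx k, hkey x hx k]
      rw [mul_neg, ← mul_assoc]
      exact neg_add_cancel _
    have hv : v = ∑ k, v k • (Pi.single k 1 : Fin n → ℝ) := by
      conv_lhs => rw [← Finset.univ_sum_single v]
      refine Finset.sum_congr rfl fun i _ => ?_
      rw [← Pi.single_smul, smul_eq_mul, mul_one]
    rw [hv]
    simp only [map_sum, map_smul, hsingle, smul_zero, Finset.sum_const_zero,
      ContinuousLinearMap.zero_apply]
    rfl
  -- `F` is locally constant on `U`
  have hloc : ∀ x ∈ U, ∀ᶠ y in nhds x, F y = F x := by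
    intro x hx
    obtain ⟨ε, hε, hball⟩ := Metric.isOpen_iff.1 hU x hx
    have hdiff : DifferentiableOn ℝ F (Metric.ball x ε) := fun y hy =>
      (hdF y (hball hy)).differentiableWithinAt
    have hz : ∀ y ∈ Metric.ball x ε, fderivWithin ℝ F (Metric.ball x ε) y = 0 := by
      intro y hy
      rw [fderivWithin_of_isOpen Metric.isOpen_ball hy]
      exact hF0 y (hball hy)
    filter_upwards [Metric.ball_mem_nhds x hε] with y hy
    exact (convex_ball x ε).is_const_of_fderivWithin_eq_zero hdiff hz hy
      (Metric.mem_ball_self hε)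
  -- hence constant on the connected set `U`
  haveI : PreconnectedSpace U := Subtype.preconnectedSpace hconn.isPreconnected
  have hgl : IsLocallyConstant (fun p : U => F p) := by
    rw [IsLocallyConstant.iff_eventually_eq]
    intro p
    exact continuous_subtype_val.continuousAt.eventually (hloc p.1 p.2)
  obtain ⟨x₀, hx₀⟩ := hconn.nonempty
  have hcst : ∀ x ∈ U, F x = F x₀ := fun x hx =>
    hgl.apply_eq_of_preconnectedSpace ⟨x, hx⟩ ⟨x₀, hx₀⟩
  refine ⟨F x₀, ?_, ?_⟩
  · have hinv : IsUnit ((A x₀)⁻¹) := by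
      obtain ⟨u, hu⟩ := hAunit x₀ hx₀
      rw [Matrix.nonsing_inv_eq_ringInverse, ← hu, Ring.inverse_unit]
      exact u⁻¹.isUnit
    exact hinv.mul (hA'unit x₀ hx₀)
  · intro x hx
    have hdet : IsUnit (A x).det := (Matrix.isUnit_iff_isUnit_det _).1 (hAunit x hx)
    have h := congrArg (fun M => A x * M) (hcst x hx)
    simpa only [hF, Matrix.mul_nonsing_inv_cancel_left _ _ hdet] using h
end

section
/- Let n ≥ 1, let U ⊆ ℝⁿ be open, let Γ : Fin n → (U → Matrix n ℝ) be smooth, and let A : U → Matrix n ℝ be smooth with all values invertible and ∂_k A = −Γ_k·A on U for all k. Define for each i' ∈ Fin n the smooth vector field E_{i'} : U → ℝⁿ by (E_{i'} x) i := (A x) i i' (the i'-th column of A). If the fields E_{i'} pairwise commute on U, i.e. the Lie brackets [E_{i'}, E_{j'}] x := fderiv ℝ E_{j'} x (E_{i'} x) − fderiv ℝ E_{i'} x (E_{j'} x) vanish for all i', j' and all x ∈ U, then Γ is torsion free on U: (Γ k x) i l = (Γ l x) i k for all i, k, l and all x ∈ U. (If a holonomic frame exists in which a linear connection's components vanish on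 a neighborhood, the connection is torsion free there.) -/
attribute [local instance] Matrix.normedAddCommGroup Matrix.normedSpace

/-- The continuous linear map extracting column `j'` of a matrix. -/
noncomputable def colL (n : ℕ) (j' : Fin n) : Matrix (Fin n) (Fin n) ℝ →L[ℝ] (Fin n → ℝ) :=
  LinearMap.toContinuousLinearMap
    { toFun := fun M i => M i j'
      map_add' := fun _ _ => rfl
      map_smul' := fun _ _ => rfl }

open Matrix

/-- If the frame in which the components of a linear connection vanish on an open set `U`
(the columns of a parallel frame matrix `A`) is holonomic on `U` — the frame vector fields
pairwise commute — then the connection is torsion free on `U`. -/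
theorem holonomic_parallel_frame_implies_torsion_free
    (n : ℕ) (hn : 1 ≤ n) (U : Set (Fin n → ℝ)) (hU : IsOpen U)
    (Γ : Fin n → (Fin n → ℝ) → Matrix (Fin n) (Fin n) ℝ)
    (hΓ : ∀ k, ContDiffOn ℝ (⊤ : ℕ∞) (Γ k) U)
    (A : (Fin n → ℝ) → Matrix (Fin n) (Fin n) ℝ)
    (hA : ContDiffOn ℝ (⊤ : ℕ∞) A U)
    (hAunit : ∀ x ∈ U, IsUnit (A x))
    (hpar : ∀ x ∈ U, ∀ k, fderiv ℝ A x (Pi.single k 1) = -(Γ k x * A x))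
    (E : Fin n → (Fin n → ℝ) → (Fin n → ℝ))
    (hEdef : ∀ i', E i' = fun x => fun i => A x i i')
    (hcomm : ∀ i' j', ∀ x ∈ U,
      fderiv ℝ (E j') x (E i' x) - fderiv ℝ (E i') x (E j' x) = 0) :
    ∀ i k l, ∀ x ∈ U, Γ k x i l = Γ l x i k := by
  intro i k l x hx
  have hAd : DifferentiableAt ℝ A x :=
    (hA.differentiableOn (by simp)).differentiableAt (hU.mem_nhds hx)
  -- fderiv of E j'
  have hEfd : ∀ j', fderiv ℝ (E j') x = (colL n j').comp (fderiv ℝ A x) := by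
    intro j'
    have hEj : E j' = fun y => colL n j' (A y) := by
      rw [hEdef]; rfl
    rw [hEj]
    exact (((colL n j').hasFDerivAt).comp x hAd.hasFDerivAt).fderiv
  -- derivative of A in direction v
  have hdir : ∀ v : Fin n → ℝ,
      fderiv ℝ A x v = ∑ m, v m • (-(Γ m x * A x)) := by
    intro v
    have hv : fderiv ℝ A x v = fderiv ℝ A x (∑ m, Pi.single m (v m)) := by
      rw [Finset.univ_sum_single]
    rw [hv, map_sum]
    refine Finset.sum_congr rfl fun m _ => ?_
    have hsingle : Pi.single m (v m) = v m • (Pi.single m 1 : Fin n → ℝ) := by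
      rw [← Pi.single_smul]; simp
    rw [hsingle, ContinuousLinearMap.map_smul, hpar x hx m]
  -- key identity from commuting frame
  have key : ∀ i' j' : Fin n,
      ∑ m, A x m i' * ∑ p, Γ m x i p * A x p j'
        = ∑ m, A x m j' * ∑ p, Γ m x i p * A x p i' := by
    intro i' j'
    have h0 := congrFun (hcomm i' j' x hx) i
    rw [hEfd i', hEfd j'] at h0
    have hEi : E i' x = fun q => A x q i' := by rw [hEdef]
    have hEj : E j' x = fun q => A x q j' := by rw [hEdef]
    simp only [ContinuousLinearMap.comp_apply, hEi, hEj, Pi.sub_apply,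
      Pi.zero_apply] at h0
    rw [hdir, hdir] at h0
    have hc : ∀ (c : Fin n) (w : Fin n → ℝ),
        colL n c (∑ m, w m • (-(Γ m x * A x))) i
          = -∑ m, w m * ∑ p, Γ m x i p * A x p c := by
      intro c w
      have h1 : colL n c (∑ m, w m • (-(Γ m x * A x))) i
          = ∑ m, (w m • (-(Γ m x * A x))) i c := by
        rw [map_sum]
        simp [colL]
        rfl
      rw [h1, ← Finset.sum_neg_distrib]
      refine Finset.sum_congr rfl fun m _ => ?_
      simp [Matrix.mul_apply, Finset.mul_sum, mul_comm]
    rw [hc, hc] at h0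
    have h2 := sub_eq_zero.mp h0
    have h3 : ∑ m, A x m i' * ∑ p, Γ m x i p * A x p j'
        = ∑ m, A x m j' * ∑ p, Γ m x i p * A x p i' := by
      have := neg_injective h2
      linarith [this]
    exact h3
  -- matrix S of torsion components
  set S : Matrix (Fin n) (Fin n) ℝ := Matrix.of fun m p => Γ p x i m - Γ m x i p
    with hSdef
  have hS0 : (A x)ᵀ * S * (A x) = 0 := by
    ext i' j'
    show ∑ p, (∑ m, (A x)ᵀ i' m * S m p) * A x p j' = 0
    simp only [Matrix.transpose_apply, hSdef, Matrix.of_apply, mul_sub, sub_mul,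
      Finset.sum_sub_distrib]
    rw [sub_eq_zero]
    calc ∑ p, (∑ m, A x m i' * Γ p x i m) * A x p j'
        = ∑ p, A x p j' * ∑ m, Γ p x i m * A x m i' := by
          refine Finset.sum_congr rfl fun p _ => ?_
          rw [Finset.sum_mul, Finset.mul_sum]
          exact Finset.sum_congr rfl fun m _ => by ring
      _ = ∑ m, A x m i' * ∑ p, Γ m x i p * A x p j' := (key i' j').symm
      _ = ∑ p, (∑ m, A x m i' * Γ m x i p) * A x p j' := by
          simp only [Finset.mul_sum, Finset.sum_mul]
          rw [Finset.sum_comm]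
          exact Finset.sum_congr rfl fun p _ =>
            Finset.sum_congr rfl fun m _ => by ring
  have hdet : IsUnit (A x).det := (Matrix.isUnit_iff_isUnit_det _).mp (hAunit x hx)
  have hdetT : IsUnit (A x)ᵀ.det := by rwa [Matrix.det_transpose]
  have hSzero : S = 0 := by
    have h1 : ((A x)ᵀ)⁻¹ * ((A x)ᵀ * S * (A x)) * (A x)⁻¹ = S := by
      rw [← Matrix.mul_assoc, ← Matrix.mul_assoc,
        Matrix.nonsing_inv_mul _ hdetT, Matrix.one_mul, Matrix.mul_assoc,
        Matrix.mul_nonsing_inv _ hdet, Matrix.mul_one]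
    rw [hS0] at h1
    simpa using h1.symm
  have hfin := congrFun (congrFun hSzero l) k
  simp [hSdef] at hfin
  linarith
end

section
/- Let n ≥ 1, let U ⊆ ℝⁿ be open, let Γ : Fin n → (U → Matrix n ℝ) be smooth and torsion free on U, i.e. (Γ k x) i l = (Γ l x) i k for all i, k, l, x ∈ U, and let A : U → Matrix n ℝ be smooth with all values invertible and ∂_k A = −Γ_k·A on U for all k. Then the frame vector fields E_{i'} : U → ℝⁿ, (E_{i'} x) i := (A x) i i', pairwise commute on U: [E_{i'}, E_{j'}] x := fderiv ℝ E_{j'} x (E_{i'} x) − fderiv ℝ E_{i'} x (E_{j'} x) = 0 for all i', j' and all x ∈ U. (If a flat linear connection is torsion free on a neighborhood, then every frame there in which its components vanish is holonomic.) -/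
attribute [local instance] Matrix.normedAddCommGroup Matrix.normedSpace

/-- If a (flat) linear connection is torsion free on an open set `U`, then every frame on `U` in
which its components vanish (the columns of a parallel frame matrix `A`) is holonomic on `U`:
the frame vector fields pairwise commute. -/
theorem torsion_free_implies_parallel_frame_holonomic
    (n : ℕ) (hn : 1 ≤ n) (U : Set (Fin n → ℝ)) (hU : IsOpen U)
    (Γ : Fin n → (Fin n → ℝ) → Matrix (Fin n) (Fin n) ℝ)
    (hΓ : ∀ k, ContDiffOn ℝ (⊤ : ℕ∞) (Γ k) U)
    (htf : ∀ i k l, ∀ x ∈ U, Γ k x i l = Γ l x i k)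
    (A : (Fin n → ℝ) → Matrix (Fin n) (Fin n) ℝ)
    (hA : ContDiffOn ℝ (⊤ : ℕ∞) A U)
    (hAunit : ∀ x ∈ U, IsUnit (A x))
    (hpar : ∀ x ∈ U, ∀ k, fderiv ℝ A x (Pi.single k 1) = -(Γ k x * A x))
    (E : Fin n → (Fin n → ℝ) → (Fin n → ℝ))
    (hEdef : ∀ i', E i' = fun x => fun i => A x i i') :
    ∀ i' j', ∀ x ∈ U,
      fderiv ℝ (E j') x (E i' x) - fderiv ℝ (E i') x (E j' x) = 0 := by
  intro i' j' x hx
  have hdA : DifferentiableAt ℝ A x :=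
    (hA.contDiffAt (hU.mem_nhds hx)).differentiableAt (by simp)
  have key : ∀ p : Fin n, ∀ v : Fin n → ℝ,
      fderiv ℝ (E p) x v = fun i => ∑ k, v k * (-(Γ k x * A x)) i p := by
    intro p v
    set L : Matrix (Fin n) (Fin n) ℝ →ₗ[ℝ] (Fin n → ℝ) :=
      { toFun := fun M i => M i p,
        map_add' := fun _ _ => rfl,
        map_smul' := fun _ _ => rfl } with hL
    have hEp : E p = fun y => L.toContinuousLinearMap (A y) := by
      rw [hEdef]; rfl
    have hfd : fderiv ℝ (E p) x = (L.toContinuousLinearMap).comp (fderiv ℝ A x) := by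
      rw [hEp]
      exact (L.toContinuousLinearMap.hasFDerivAt.comp x hdA.hasFDerivAt).fderiv
    have hv : v = ∑ k, v k • (Pi.single k 1 : Fin n → ℝ) := by
      funext j
      simp [Finset.sum_apply, Pi.single_apply]
    have hdAv : fderiv ℝ A x v = ∑ k, v k • (-(Γ k x * A x)) := by
      conv_lhs => rw [hv]
      rw [map_sum]
      refine Finset.sum_congr rfl fun k _ => ?_
      rw [map_smul, hpar x hx]
    rw [hfd]
    simp only [ContinuousLinearMap.coe_comp', Function.comp_apply, hdAv]
    funext i
    show (∑ k, v k • (-(Γ k x * A x))) i p = _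
    simp [Finset.sum_apply, Matrix.sum_apply, Matrix.smul_apply, smul_eq_mul]
  rw [key j' (E i' x), key i' (E j' x), hEdef i', hEdef j']
  funext i
  simp only [Pi.sub_apply, Pi.zero_apply, Matrix.neg_apply, Matrix.mul_apply, mul_neg,
    Finset.sum_neg_distrib, Finset.mul_sum]
  rw [sub_eq_zero, neg_inj]
  rw [Finset.sum_comm]
  refine Finset.sum_congr rfl fun k _ => Finset.sum_congr rfl fun l _ => ?_
  rw [htf i l k x hx]
  ring
end

section
/- Let n ≥ 1, x₀ ∈ ℝⁿ, v ∈ ℝⁿ and W₀ ∈ Matrix n ℝ. Then there exists a smooth map A : ℝⁿ → Matrix n ℝ with A x₀ invertible and W₀·(A x₀) + fderiv ℝ A x₀ v = 0 if and only if (v ≠ 0 or W₀ = 0). (For a fixed vector field X, a local frame in which the components of the S-derivation D_X vanish at the point x₀ always exists when X(x₀) ≠ 0; when X(x₀) = 0 it exists exactly when the components W_X already vanish at x₀.) -/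
attribute [local instance] Matrix.normedAddCommGroup Matrix.normedSpace

/-- For a fixed vector field with value `v` at `x₀` and component matrix `W₀` of the
S-derivation at `x₀`, a frame in which the components vanish at `x₀`
(a smooth `A` with `A x₀` invertible and `W₀·(A x₀) + dA(x₀)(v) = 0`) exists
iff `v ≠ 0` or `W₀ = 0`. -/
theorem frame_vanishing_at_point_along_fixed_field_iff
    (n : ℕ) (hn : 1 ≤ n) (x₀ : Fin n → ℝ) (v : Fin n → ℝ)
    (W₀ : Matrix (Fin n) (Fin n) ℝ) :
    (∃ A : (Fin n → ℝ) → Matrix (Fin n) (Fin n) ℝ,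
      ContDiff ℝ (⊤ : ℕ∞) A ∧ IsUnit (A x₀) ∧ W₀ * A x₀ + fderiv ℝ A x₀ v = 0)
    ↔ (v ≠ 0 ∨ W₀ = 0) := by
  constructor
  · rintro ⟨A, hA, hU, heq⟩
    by_cases hv : v = 0
    · right
      rw [hv, ContinuousLinearMap.map_zero, add_zero] at heq
      refine hU.mul_right_cancel ?_
      rw [heq, zero_mul]
    · exact Or.inl hv
  · rintro (hv | hW)
    · obtain ⟨i, hi⟩ := Function.ne_iff.mp hv
      have hi : v i ≠ 0 := hi
      set f : (Fin n → ℝ) →L[ℝ] ℝ :=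
        (v i)⁻¹ • (ContinuousLinearMap.proj i : (Fin n → ℝ) →L[ℝ] ℝ) with hf
      have hfv : f v = 1 := by
        simp [hf, inv_mul_cancel₀ hi]
      set L : (Fin n → ℝ) →L[ℝ] Matrix (Fin n) (Fin n) ℝ := f.smulRight W₀ with hL
      refine ⟨fun x => ((1 : Matrix (Fin n) (Fin n) ℝ) + f x₀ • W₀) - L x, ?_, ?_, ?_⟩
      · exact contDiff_const.sub L.contDiff
      · have : ((1 : Matrix (Fin n) (Fin n) ℝ) + f x₀ • W₀) - L x₀ = 1 := by
          simp [hL]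
        show IsUnit ((1 : Matrix (Fin n) (Fin n) ℝ) + f x₀ • W₀ - L x₀)
        rw [this]; exact isUnit_one
      · have hder : HasFDerivAt
            (fun x => ((1 : Matrix (Fin n) (Fin n) ℝ) + f x₀ • W₀) - L x)
            ((0 : (Fin n → ℝ) →L[ℝ] Matrix (Fin n) (Fin n) ℝ) - L) x₀ :=
          (hasFDerivAt_const _ _).sub L.hasFDerivAt
        rw [hder.fderiv]
        have h1 : ((1 : Matrix (Fin n) (Fin n) ℝ) + f x₀ • W₀) - L x₀ = 1 := by
          simp [hL]
        show W₀ * ((1 : Matrix (Fin n) (Fin n) ℝ) + f x₀ • W₀ - L x₀) + (0 - L) v = 0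
        rw [h1]
        simp [hL, hfv]
    · exact ⟨fun _ => 1, contDiff_const, isUnit_one, by simp [hW, fderiv_const]⟩
end

section
/- Let n ≥ 1, x₀ ∈ ℝⁿ, v ∈ ℝⁿ with v ≠ 0, and W₀ ∈ Matrix n ℝ. Then there exists a smooth map f : ℝⁿ → ℝⁿ such that the Jacobian fderiv ℝ f x₀ is invertible and, for every u ∈ ℝⁿ, the second derivative satisfies fderiv ℝ (fun x => fderiv ℝ f x) x₀ v u = −(W₀.mulVec (fderiv ℝ f x₀ u)). (If for a fixed vector field X with X(x₀) ≠ 0 there is a local frame in which the components of D_X vanish at x₀, then there exist holonomic — coordinate — frames with this property.) -/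
attribute [local instance] Matrix.normedAddCommGroup Matrix.normedSpace

set_option maxHeartbeats 1000000 in
/-- If the vector field does not vanish at `x₀` (`v ≠ 0`), then there exist holonomic (coordinate)
frames in which the components of the S-derivation along it vanish at `x₀`: a smooth `f` with
invertible Jacobian at `x₀` whose second derivative satisfies
`D²f(x₀)(v, u) = -W₀·(Df(x₀) u)` for all `u`. -/
theorem holonomic_frame_vanishing_at_point_along_fixed_field
    (n : ℕ) (hn : 1 ≤ n) (x₀ : Fin n → ℝ) (v : Fin n → ℝ) (hv : v ≠ 0)
    (W₀ : Matrix (Fin n) (Fin n) ℝ) :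
    ∃ f : (Fin n → ℝ) → (Fin n → ℝ),
      ContDiff ℝ (⊤ : ℕ∞) f ∧ Function.Bijective (fderiv ℝ f x₀) ∧
      ∀ u : Fin n → ℝ,
        fderiv ℝ (fun x => fderiv ℝ f x) x₀ v u = -(W₀.mulVec (fderiv ℝ f x₀ u)) := by
  classical
  have hs : dotProduct v v ≠ 0 := by
    simpa [dotProduct_self_eq_zero] using hv
  set s : ℝ := dotProduct v v with hs_def
  -- symmetric bilinear map B with B v u + B u v = -W₀.mulVec u
  set Bl : (Fin n → ℝ) →ₗ[ℝ] (Fin n → ℝ) →ₗ[ℝ] (Fin n → ℝ) := LinearMap.mk₂ ℝ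
    (fun a b => (-(1/(2*s))) • ((dotProduct a v) • W₀.mulVec b
          + (dotProduct b v) • W₀.mulVec a)
        + ((dotProduct a v) * (dotProduct b v) / (2*s^2)) • W₀.mulVec v)
    (by
      intro a a' b
      simp only [add_dotProduct, Matrix.mulVec_add]
      module)
    (by
      intro c a b
      simp only [smul_dotProduct, Matrix.mulVec_smul, smul_eq_mul]
      match_scalars <;> ring)
    (by
      intro a b b'
      simp only [dotProduct_add, Matrix.mulVec_add, add_dotProduct]
      module)
    (by
      intro c a b
      simp only [smul_dotProduct, Matrix.mulVec_smul, smul_eq_mul]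
      match_scalars <;> ring)
    with hBl
  set L : (Fin n → ℝ) →L[ℝ] (Fin n → ℝ) →L[ℝ] (Fin n → ℝ) :=
    LinearMap.toContinuousLinearMap
      ((LinearMap.toContinuousLinearMap :
          ((Fin n → ℝ) →ₗ[ℝ] (Fin n → ℝ)) ≃ₗ[ℝ] ((Fin n → ℝ) →L[ℝ] (Fin n → ℝ))).toLinearMap.comp
        Bl) with hL
  have hLapp : ∀ a b, L a b = Bl a b := by
    intro a b
    simp [hL]
  -- key algebraic identity
  have hkey : ∀ u, L v u + L u v = -(W₀.mulVec u) := by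
    intro u
    rw [hLapp, hLapp, hBl]
    simp only [LinearMap.mk₂_apply, ← hs_def]
    match_scalars <;> field_simp <;> ring
  set Φ : (Fin n → ℝ) →L[ℝ] ((Fin n → ℝ) →L[ℝ] (Fin n → ℝ)) := L + L.flip with hΦ
  set f : (Fin n → ℝ) → (Fin n → ℝ) := fun x => x + L (x - x₀) (x - x₀) with hf
  clear_value f Φ L Bl s
  have hb : IsBoundedBilinearMap ℝ fun p : (Fin n → ℝ) × (Fin n → ℝ) => L p.1 p.2 :=
    L.isBoundedBilinearMap
  -- derivative at every point
  have hf' : ∀ x, HasFDerivAt f (ContinuousLinearMap.id ℝ (Fin n → ℝ) + Φ (x - x₀)) x := by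
    intro x
    rw [hf]
    have hg : HasFDerivAt (fun x : Fin n → ℝ => (x - x₀, x - x₀))
        ((ContinuousLinearMap.id ℝ (Fin n → ℝ)).prod (ContinuousLinearMap.id ℝ (Fin n → ℝ))) x :=
      ((hasFDerivAt_id x).sub_const x₀).prodMk ((hasFDerivAt_id x).sub_const x₀)
    have h2 := (hb.hasFDerivAt (x - x₀, x - x₀)).comp x hg
    have h3 := (hasFDerivAt_id x).add h2
    refine h3.congr_fderiv ?_
    ext u
    simp [hΦ, IsBoundedBilinearMap.deriv_apply]
  have hfderiv : ∀ x, fderiv ℝ f x = ContinuousLinearMap.id ℝ (Fin n → ℝ) + Φ (x - x₀) :=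
    fun x => (hf' x).fderiv
  have hfd0 : fderiv ℝ f x₀ = ContinuousLinearMap.id ℝ (Fin n → ℝ) := by
    rw [hfderiv]; simp
  -- second derivative
  have hsecond : fderiv ℝ (fun x => fderiv ℝ f x) x₀ = Φ := by
    have h1 : (fun x => fderiv ℝ f x)
        = fun x => ContinuousLinearMap.id ℝ (Fin n → ℝ) + Φ (x - x₀) := funext hfderiv
    rw [h1]
    have h2 : HasFDerivAt (fun x : Fin n → ℝ =>
        ContinuousLinearMap.id ℝ (Fin n → ℝ) + Φ (x - x₀)) Φ x₀ := by
      have h0 : HasFDerivAt (fun x : Fin n → ℝ => x - x₀)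
          (ContinuousLinearMap.id ℝ (Fin n → ℝ)) x₀ := (hasFDerivAt_id x₀).sub_const x₀
      have h1 := HasFDerivAt.comp x₀ Φ.hasFDerivAt h0
      have h := h1.const_add (ContinuousLinearMap.id ℝ (Fin n → ℝ))
      refine h.congr_fderiv ?_
      ext u : 1
      simp
    exact h2.fderiv
  refine ⟨f, ?_, ?_, ?_⟩
  · -- smoothness
    have h : ContDiff ℝ (⊤ : ℕ∞) (fun x : Fin n → ℝ => L (x - x₀) (x - x₀)) :=
      hb.contDiff.comp ((contDiff_id.sub contDiff_const).prodMk (contDiff_id.sub contDiff_const))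
    rw [hf]
    exact contDiff_id.add h
  · rw [hfd0]
    exact Function.bijective_id
  · intro u
    rw [hsecond, hfd0]
    simpa [hΦ] using hkey u
end

section
/- Let n ≥ 1, x₀ ∈ ℝⁿ, and let W be an arbitrary map assigning to each smooth vector field X : ℝⁿ → ℝⁿ a function W X : ℝⁿ → Matrix n ℝ. Then the following are equivalent: (a) there exists a smooth map A : ℝⁿ → Matrix n ℝ with A x₀ invertible such that for every smooth X one has (W X x₀)·(A x₀) + fderiv ℝ A x₀ (X x₀) = 0; (b) there exist matrices Γ : Fin n → Matrix n ℝ such that for every smooth X one has W X x₀ = Σ_k (X x₀ k) • Γ k. (An S-derivation D is a linear connection at the point x₀ if and only if there is a local frame in which the components of D along every vector field vanish at x₀.) -/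
attribute [local instance] Matrix.normedAddCommGroup Matrix.normedSpace

/-- An S-derivation is a linear connection at the point `x₀` iff there is a local frame in which
its components along every smooth vector field vanish at `x₀`. -/
theorem sderivation_linear_connection_at_point_iff_vanishing_frame
    (n : ℕ) (hn : 1 ≤ n) (x₀ : Fin n → ℝ)
    (W : ((Fin n → ℝ) → (Fin n → ℝ)) → (Fin n → ℝ) → Matrix (Fin n) (Fin n) ℝ) :
    (∃ A : (Fin n → ℝ) → Matrix (Fin n) (Fin n) ℝ,
      ContDiff ℝ (⊤ : ℕ∞) A ∧ IsUnit (A x₀) ∧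
      ∀ X : (Fin n → ℝ) → (Fin n → ℝ), ContDiff ℝ (⊤ : ℕ∞) X →
        W X x₀ * A x₀ + fderiv ℝ A x₀ (X x₀) = 0)
    ↔ (∃ Γ : Fin n → Matrix (Fin n) (Fin n) ℝ,
      ∀ X : (Fin n → ℝ) → (Fin n → ℝ), ContDiff ℝ (⊤ : ℕ∞) X →
        W X x₀ = ∑ k, X x₀ k • Γ k) := by
  constructor
  · rintro ⟨A, hA, hu, h⟩
    set D := fderiv ℝ A x₀ with hD
    refine ⟨fun k => -(D (Pi.single k 1) * (A x₀)⁻¹), fun X hX => ?_⟩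
    have hdet : IsUnit (A x₀).det := (Matrix.isUnit_iff_isUnit_det _).mp hu
    have h1 : W X x₀ * A x₀ = -(D (X x₀)) := by
      exact eq_neg_of_add_eq_zero_left (h X hX)
    have h2 : W X x₀ = -(D (X x₀)) * (A x₀)⁻¹ := by
      calc W X x₀ = W X x₀ * A x₀ * (A x₀)⁻¹ := by
            rw [Matrix.mul_nonsing_inv_cancel_right _ _ hdet]
        _ = -(D (X x₀)) * (A x₀)⁻¹ := by rw [h1]
    have h3 : X x₀ = ∑ k, X x₀ k • (Pi.single k 1 : Fin n → ℝ) := by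
      funext j
      simp [Finset.sum_apply, Pi.single_apply, Finset.sum_ite_eq']
    have key : D (X x₀) = ∑ k, X x₀ k • D (Pi.single k 1) := by
      conv_lhs => rw [h3]
      simp [map_sum]
    rw [h2, key]
    simp [Matrix.neg_mul, Finset.sum_mul, Matrix.smul_mul, smul_neg,
      Finset.sum_neg_distrib]
  · rintro ⟨Γ, h⟩
    set L : (Fin n → ℝ) →L[ℝ] Matrix (Fin n) (Fin n) ℝ :=
      ∑ k, (ContinuousLinearMap.proj k).smulRight (Γ k) with hL
    have hLval : ∀ v, L v = ∑ k, v k • Γ k := by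
      intro v
      simp [hL, ContinuousLinearMap.sum_apply]
    refine ⟨fun x => (1 + L x₀) - L x, ?_, ?_, ?_⟩
    · exact contDiff_const.sub L.contDiff
    · simp
    · intro X hX
      have hder : HasFDerivAt (fun x => (1 + L x₀) - L x) (-L) x₀ :=
        L.hasFDerivAt.const_sub _
      rw [hder.fderiv]
      simp only [add_sub_cancel_right, ContinuousLinearMap.neg_apply]
      rw [h X hX, ← hLval, Matrix.mul_one, add_neg_cancel]
end

section
/- Let n ≥ 1, x₀ ∈ ℝⁿ, let Γ : Fin n → Matrix n ℝ, and let A, A' : ℝⁿ → Matrix n ℝ be smooth maps with A x₀ and A' x₀ invertible, such that for every k: (Γ k)·(A x₀) + fderiv ℝ A x₀ (e_k) = 0 and (Γ k)·(A' x₀) + fderiv ℝ A' x₀ (e_k) = 0. Then the transition matrix C x := (A x)⁻¹·(A' x) satisfies fderiv ℝ C x₀ = 0. (All frames in which the components of a linear connection vanish at a point x₀ are obtained from one another by linear transformations whose coefficients have vanishing derivatives along the frame vectors at x₀.) -/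
attribute [local instance] Matrix.normedAddCommGroup Matrix.normedSpace

open Matrix

private lemma my_contDiff_entry {n : ℕ} {A : (Fin n → ℝ) → Matrix (Fin n) (Fin n) ℝ}
    (hA : ContDiff ℝ (⊤ : ℕ∞) A) (i j : Fin n) : ContDiff ℝ (⊤ : ℕ∞) (fun x => A x i j) :=
  contDiff_pi.mp (contDiff_pi.mp hA i) j

private lemma my_contDiff_det {n : ℕ} {M : (Fin n → ℝ) → Matrix (Fin n) (Fin n) ℝ}
    (h : ∀ i j, ContDiff ℝ (⊤ : ℕ∞) (fun x => M x i j)) :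
    ContDiff ℝ (⊤ : ℕ∞) (fun x => (M x).det) := by
  simp only [Matrix.det_apply']
  exact ContDiff.sum fun σ _ =>
    contDiff_const.mul (contDiff_prod fun i _ => h (σ i) i)

private lemma my_contDiff_adjugate {n : ℕ} {M : (Fin n → ℝ) → Matrix (Fin n) (Fin n) ℝ}
    (h : ∀ i j, ContDiff ℝ (⊤ : ℕ∞) (fun x => M x i j)) (i j : Fin n) :
    ContDiff ℝ (⊤ : ℕ∞) (fun x => (M x).adjugate i j) := by
  simp only [Matrix.adjugate_apply]
  apply my_contDiff_det
  intro k l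
  by_cases hk : k = j
  · simp only [hk, Matrix.updateRow_self]
    exact contDiff_const
  · simp only [Matrix.updateRow_ne hk]
    exact h k l

private lemma my_contDiffAt_inv {n : ℕ} {A : (Fin n → ℝ) → Matrix (Fin n) (Fin n) ℝ}
    (hA : ContDiff ℝ (⊤ : ℕ∞) A) {x₀ : Fin n → ℝ} (hu : IsUnit (A x₀)) :
    ContDiffAt ℝ (⊤ : ℕ∞) (fun x => (A x)⁻¹) x₀ := by
  have hdet : ContDiff ℝ (⊤ : ℕ∞) (fun x => (A x).det) := my_contDiff_det (my_contDiff_entry hA)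
  have hdet0 : (A x₀).det ≠ 0 := by
    have := (Matrix.isUnit_iff_isUnit_det _).mp hu
    simpa [isUnit_iff_ne_zero] using this
  have h1 : ContDiffAt ℝ (⊤ : ℕ∞) (fun x => ((A x).det)⁻¹) x₀ :=
    (contDiffAt_inv ℝ hdet0).comp x₀ hdet.contDiffAt
  have h2 : ContDiff ℝ (⊤ : ℕ∞) (fun x => (A x).adjugate) :=
    contDiff_pi.mpr fun i => contDiff_pi.mpr fun j => my_contDiff_adjugate (my_contDiff_entry hA) i j
  have h3 : ContDiffAt ℝ (⊤ : ℕ∞) (fun x => ((A x).det)⁻¹ • (A x).adjugate) x₀ :=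
    h1.smul h2.contDiffAt
  have : (fun x => (A x)⁻¹) = fun x => ((A x).det)⁻¹ • (A x).adjugate := by
    funext x
    rw [Matrix.inv_def, Ring.inverse_eq_inv']
  rw [this]
  exact h3

private lemma my_mul_bb (n : ℕ) :
    IsBoundedBilinearMap ℝ (fun p : Matrix (Fin n) (Fin n) ℝ × Matrix (Fin n) (Fin n) ℝ =>
      p.1 * p.2) where
  add_left := Matrix.add_mul
  smul_left c A B := Matrix.smul_mul c A B
  add_right := Matrix.mul_add
  smul_right c A B := Matrix.mul_smul A c B
  bound := by
    refine ⟨n + 1, by positivity, fun A B => ?_⟩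
    have hnn : (0:ℝ) ≤ (n + 1) * ‖A‖ * ‖B‖ := by positivity
    rw [Matrix.norm_le_iff hnn]
    intro i j
    calc ‖(A * B) i j‖ = ‖∑ k, A i k * B k j‖ := by rw [Matrix.mul_apply]
      _ ≤ ∑ k, ‖A i k * B k j‖ := norm_sum_le _ _
      _ ≤ ∑ _k : Fin n, ‖A‖ * ‖B‖ := by
          refine Finset.sum_le_sum fun k _ => ?_
          rw [norm_mul]
          exact mul_le_mul (Matrix.norm_entry_le_entrywise_sup_norm A)
            (Matrix.norm_entry_le_entrywise_sup_norm B) (norm_nonneg _) (norm_nonneg _)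
      _ = n * (‖A‖ * ‖B‖) := by simp [Finset.sum_const, mul_comm]
      _ ≤ (n + 1) * ‖A‖ * ‖B‖ := by
          rw [mul_assoc]
          exact mul_le_mul_of_nonneg_right (by linarith) (by positivity)

/-- Two frames in which the components of a linear connection vanish at the point `x₀` are
related by a transition matrix `C = A⁻¹·A'` whose derivative vanishes at `x₀`. -/
theorem transition_between_frames_vanishing_at_point_has_zero_deriv
    (n : ℕ) (hn : 1 ≤ n) (x₀ : Fin n → ℝ)
    (Γ : Fin n → Matrix (Fin n) (Fin n) ℝ)
    (A A' : (Fin n → ℝ) → Matrix (Fin n) (Fin n) ℝ)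
    (hA : ContDiff ℝ (⊤ : ℕ∞) A) (hA' : ContDiff ℝ (⊤ : ℕ∞) A')
    (hAunit : IsUnit (A x₀)) (hA'unit : IsUnit (A' x₀))
    (hvan : ∀ k, Γ k * A x₀ + fderiv ℝ A x₀ (Pi.single k 1) = 0)
    (hvan' : ∀ k, Γ k * A' x₀ + fderiv ℝ A' x₀ (Pi.single k 1) = 0)
    (C : (Fin n → ℝ) → Matrix (Fin n) (Fin n) ℝ)
    (hCdef : C = fun x => (A x)⁻¹ * A' x) :
    fderiv ℝ C x₀ = 0 := by
  have hdetA : IsUnit (A x₀).det := (Matrix.isUnit_iff_isUnit_det _).mp hAunit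
  have hdetA0 : (A x₀).det ≠ 0 := by simpa [isUnit_iff_ne_zero] using hdetA
  -- differentiability of C at x₀
  have hinv : DifferentiableAt ℝ (fun x => (A x)⁻¹) x₀ :=
    (my_contDiffAt_inv hA hAunit).differentiableAt (by simp)
  have hA'd : DifferentiableAt ℝ A' x₀ := (hA'.differentiable (by simp)) x₀
  have hAd : DifferentiableAt ℝ A x₀ := (hA.differentiable (by simp)) x₀
  have hCdiff : DifferentiableAt ℝ C x₀ := by
    rw [hCdef]
    exact ((my_mul_bb n).differentiableAt _).comp x₀ (hinv.prodMk hA'd)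
  -- product rule for A * C
  have hAC : HasFDerivAt (fun x => A x * C x)
      (((my_mul_bb n).deriv (A x₀, C x₀)).comp
        ((fderiv ℝ A x₀).prod (fderiv ℝ C x₀))) x₀ :=
    ((my_mul_bb n).hasFDerivAt (A x₀, C x₀)).comp x₀ (f := fun x => (A x, C x))
      (hAd.hasFDerivAt.prodMk hCdiff.hasFDerivAt)
  -- A * C = A' near x₀
  have hev : (fun x => A x * C x) =ᶠ[nhds x₀] A' := by
    have hdetc : ContinuousAt (fun x => (A x).det) x₀ :=
      ((my_contDiff_det (my_contDiff_entry hA)).continuous).continuousAt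
    filter_upwards [hdetc.eventually_ne hdetA0] with x hx
    rw [hCdef]
    simp only
    rw [← Matrix.mul_assoc, Matrix.mul_nonsing_inv _ (by simpa [isUnit_iff_ne_zero] using hx),
      Matrix.one_mul]
  have hA'2 : HasFDerivAt A'
      (((my_mul_bb n).deriv (A x₀, C x₀)).comp
        ((fderiv ℝ A x₀).prod (fderiv ℝ C x₀))) x₀ :=
    hAC.congr_of_eventuallyEq hev.symm
  have hLeq : (((my_mul_bb n).deriv (A x₀, C x₀)).comp
      ((fderiv ℝ A x₀).prod (fderiv ℝ C x₀))) = fderiv ℝ A' x₀ :=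
    hA'2.unique hA'd.hasFDerivAt
  -- evaluate at basis vectors
  have hAxC : A x₀ * C x₀ = A' x₀ := by
    rw [hCdef]
    simp only
    rw [← Matrix.mul_assoc, Matrix.mul_nonsing_inv _ hdetA, Matrix.one_mul]
  have key : ∀ k, fderiv ℝ C x₀ (Pi.single k 1) = 0 := by
    intro k
    have h1 : A x₀ * fderiv ℝ C x₀ (Pi.single k 1)
        + fderiv ℝ A x₀ (Pi.single k 1) * C x₀ = fderiv ℝ A' x₀ (Pi.single k 1) := by
      have := congrArg (fun L => L (Pi.single k 1)) hLeq
      exact this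
    have hdA : fderiv ℝ A x₀ (Pi.single k 1) = -(Γ k * A x₀) :=
      eq_neg_of_add_eq_zero_right (hvan k)
    have hdA' : fderiv ℝ A' x₀ (Pi.single k 1) = -(Γ k * A' x₀) :=
      eq_neg_of_add_eq_zero_right (hvan' k)
    have h2 : A x₀ * fderiv ℝ C x₀ (Pi.single k 1) = 0 := by
      have h3 : fderiv ℝ A x₀ (Pi.single k 1) * C x₀ = -(Γ k * A' x₀) := by
        rw [hdA, Matrix.neg_mul, Matrix.mul_assoc, hAxC]
      rw [h3, hdA'] at h1
      linear_combination (norm := abel) h1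
    have h4 := congrArg (fun M => (A x₀)⁻¹ * M) h2
    simpa [← Matrix.mul_assoc, Matrix.nonsing_inv_mul _ hdetA, Matrix.one_mul,
      Matrix.mul_zero] using h4
  refine ContinuousLinearMap.ext fun v => ?_
  have hv : v = ∑ i, v i • (Pi.single i (1:ℝ) : Fin n → ℝ) := by
    have h := pi_eq_sum_univ v
    convert h using 2 with i
    funext j
    simp [Pi.single_apply, eq_comm]
  rw [ContinuousLinearMap.zero_apply, hv, map_sum]
  simp [key]
end

section
/- Let n ≥ 1, x₀ ∈ ℝⁿ, and let Γ : Fin n → (ℝⁿ → Matrix n ℝ) be smooth. Then there exists a smooth map A : ℝⁿ → Matrix n ℝ with A x₀ invertible such that (Γ k x₀)·(A x₀) + fderiv ℝ A x₀ (e_k) = 0 for every k. (For every point x₀ and every linear connection there exist local frames, defined in a neighborhood of x₀, in which the connection's components vanish at x₀.) -/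
attribute [local instance] Matrix.normedAddCommGroup Matrix.normedSpace

/-- For every point `x₀` and every linear connection (with smooth component matrices `Γ k`) there
is a local frame, given by a smooth invertible matrix function `A`, in which the connection's
components vanish at `x₀`: `(Γ k x₀)·(A x₀) + dA(x₀)(eₖ) = 0` for all `k`. -/
theorem exists_frame_with_connection_components_vanishing_at_point
    (n : ℕ) (hn : 1 ≤ n) (x₀ : Fin n → ℝ)
    (Γ : Fin n → (Fin n → ℝ) → Matrix (Fin n) (Fin n) ℝ)
    (hΓ : ∀ k, ContDiff ℝ (⊤ : ℕ∞) (Γ k)) :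
    ∃ A : (Fin n → ℝ) → Matrix (Fin n) (Fin n) ℝ,
      ContDiff ℝ (⊤ : ℕ∞) A ∧ IsUnit (A x₀) ∧
      ∀ k, Γ k x₀ * A x₀ + fderiv ℝ A x₀ (Pi.single k 1) = 0 := by
  classical
  set L : (Fin n → ℝ) →L[ℝ] Matrix (Fin n) (Fin n) ℝ :=
    ∑ k : Fin n, (ContinuousLinearMap.proj k : (Fin n → ℝ) →L[ℝ] ℝ).smulRight (-(Γ k x₀)) with hL
  refine ⟨fun x => (1 : Matrix (Fin n) (Fin n) ℝ) + L (x - x₀), ?_, ?_, ?_⟩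
  · exact contDiff_const.add (L.contDiff.comp (contDiff_id.sub contDiff_const))
  · simp
  · intro k
    have hd : fderiv ℝ (fun x => (1 : Matrix (Fin n) (Fin n) ℝ) + L (x - x₀)) x₀ = L := by
      have h1 : HasFDerivAt (fun x : Fin n → ℝ => (1 : Matrix (Fin n) (Fin n) ℝ) + L (x - x₀))
          L x₀ := by
        have : HasFDerivAt (fun x : Fin n → ℝ => x - x₀) (ContinuousLinearMap.id ℝ _) x₀ :=
          (hasFDerivAt_id x₀).sub_const x₀
        exact
          (L.hasFDerivAt.comp x₀ this).const_add (1 : Matrix (Fin n) (Fin n) ℝ)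
      exact h1.fderiv
    rw [hd]
    have hLk : L (Pi.single k 1) = -(Γ k x₀) := by
      rw [hL]
      simp [ContinuousLinearMap.sum_apply, Pi.single_apply, Finset.sum_ite_eq']
    simp [hLk]
end

section
/- Let n ≥ 1, x₀ ∈ ℝⁿ, and let Γ : Fin n → Fin n → ℝⁿ be given (Γ j k ∈ ℝⁿ is the vector with components Γ^i_{jk}(x₀)). Then there exists a smooth map f : ℝⁿ → ℝⁿ with fderiv ℝ f x₀ invertible such that fderiv ℝ (fun x => fderiv ℝ f x) x₀ (e_j) (e_k) = −(fderiv ℝ f x₀) (Γ j k) for all j, k, if and only if Γ j k = Γ k j for all j, k. (In a neighborhood of a point x₀ there exist holonomic frames — local coordinates — in which the components of a linear connection vanish at x₀ if and only if the torsion of the connection vanishes at x₀.) -/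
noncomputable def Bmap (n : ℕ) (Γ : Fin n → Fin n → (Fin n → ℝ)) :
    (Fin n → ℝ) →L[ℝ] (Fin n → ℝ) →L[ℝ] (Fin n → ℝ) :=
  letI b0 : (Fin n → ℝ) →ₗ[ℝ] (Fin n → ℝ) →ₗ[ℝ] (Fin n → ℝ) :=
    LinearMap.mk₂ ℝ (fun v w => ∑ j, ∑ k, (v j * w k) • Γ j k)
      (by intro a b w; simp [add_mul, add_smul, Finset.sum_add_distrib])
      (by intro c a w; simp [mul_assoc, mul_smul, Finset.smul_sum])
      (by intro a b w; simp [mul_add, add_smul, Finset.sum_add_distrib])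
      (by intro c a w; simp [mul_comm, mul_assoc, mul_smul, Finset.smul_sum, mul_left_comm])
  LinearMap.toContinuousLinearMap
    ((LinearMap.toContinuousLinearMap :
        ((Fin n → ℝ) →ₗ[ℝ] (Fin n → ℝ)) ≃ₗ[ℝ] ((Fin n → ℝ) →L[ℝ] (Fin n → ℝ))).toLinearMap.comp b0)

lemma Bmap_single (n : ℕ) (Γ : Fin n → Fin n → (Fin n → ℝ)) (j k : Fin n) :
    Bmap n Γ (Pi.single j 1) (Pi.single k 1) = Γ j k := by
  show (∑ a, ∑ b, ((Pi.single j 1 : Fin n → ℝ) a * (Pi.single k 1 : Fin n → ℝ) b) • Γ a b) = _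
  simp [Pi.single_apply, ite_smul, Finset.sum_ite_eq']

section Main

variable (n : ℕ) (Γ : Fin n → Fin n → (Fin n → ℝ)) (x₀ : Fin n → ℝ)

noncomputable def Mmap : (Fin n → ℝ) →L[ℝ] (Fin n → ℝ) →L[ℝ] (Fin n → ℝ) :=
  (-(1/2 : ℝ)) • (Bmap n Γ + (Bmap n Γ).flip)

noncomputable def fdef : (Fin n → ℝ) → (Fin n → ℝ) :=
  fun x => x + (-(1/2 : ℝ)) • Bmap n Γ (x - x₀) (x - x₀)

lemma hasFDerivAt_fdef (x : Fin n → ℝ) :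
    HasFDerivAt (fdef n Γ x₀)
      (ContinuousLinearMap.id ℝ (Fin n → ℝ) + Mmap n Γ (x - x₀)) x := by
  have h1 : HasFDerivAt (fun x : Fin n → ℝ => ((x - x₀, x - x₀) : (Fin n → ℝ) × (Fin n → ℝ)))
      ((ContinuousLinearMap.id ℝ (Fin n → ℝ)).prod (ContinuousLinearMap.id ℝ (Fin n → ℝ))) x :=
    HasFDerivAt.prodMk ((hasFDerivAt_id x).sub_const x₀) ((hasFDerivAt_id x).sub_const x₀)
  have h2 := ((Bmap n Γ).isBoundedBilinearMap.hasFDerivAt (x - x₀, x - x₀)).comp x h1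
  have h3 := (hasFDerivAt_id x).add (h2.const_smul (-(1/2 : ℝ)))
  exact h3

lemma contDiff_fdef : ContDiff ℝ (⊤ : ℕ∞) (fdef n Γ x₀) := by
  apply contDiff_id.add
  apply ContDiff.const_smul
  have h1 : ContDiff ℝ (⊤ : ℕ∞) (fun x : Fin n → ℝ => Bmap n Γ (x - x₀)) :=
    (Bmap n Γ).contDiff.comp (contDiff_id.sub contDiff_const)
  exact h1.clm_apply (contDiff_id.sub contDiff_const)

lemma fderiv_fdef (x : Fin n → ℝ) :
    fderiv ℝ (fdef n Γ x₀) x = ContinuousLinearMap.id ℝ (Fin n → ℝ) + Mmap n Γ (x - x₀) :=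
  (hasFDerivAt_fdef n Γ x₀ x).fderiv

lemma fderiv_fderiv_fdef :
    fderiv ℝ (fun x => fderiv ℝ (fdef n Γ x₀) x) x₀ = Mmap n Γ := by
  have h : (fun x => fderiv ℝ (fdef n Γ x₀) x)
      = fun x => ContinuousLinearMap.id ℝ (Fin n → ℝ) + Mmap n Γ (x - x₀) :=
    funext fun x => fderiv_fdef n Γ x₀ x
  rw [h]
  have hM : HasFDerivAt (fun x => ContinuousLinearMap.id ℝ (Fin n → ℝ) + Mmap n Γ (x - x₀))
      (Mmap n Γ) x₀ := by
    have := (((Mmap n Γ).hasFDerivAt (x := x₀)).sub_const (Mmap n Γ x₀)).const_add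
      (ContinuousLinearMap.id ℝ (Fin n → ℝ))
    simpa [map_sub] using this
  exact hM.fderiv

end Main



attribute [local instance] Matrix.normedAddCommGroup Matrix.normedSpace

/-- There exist local coordinates (a holonomic frame) in which the components of a linear
connection vanish at the point `x₀` — i.e. a smooth `f` with invertible Jacobian at `x₀` and
`D²f(x₀)(e_j, e_k) = -Df(x₀)(Γ_{jk})` — if and only if the torsion vanishes at `x₀`,
i.e. `Γ j k = Γ k j` for all `j, k`. -/
theorem holonomic_frame_vanishing_at_point_iff_torsion_free
    (n : ℕ) (hn : 1 ≤ n) (x₀ : Fin n → ℝ)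
    (Γ : Fin n → Fin n → (Fin n → ℝ)) :
    (∃ f : (Fin n → ℝ) → (Fin n → ℝ),
      ContDiff ℝ (⊤ : ℕ∞) f ∧ Function.Bijective (fderiv ℝ f x₀) ∧
      ∀ j k, fderiv ℝ (fun x => fderiv ℝ f x) x₀ (Pi.single j 1) (Pi.single k 1)
        = -(fderiv ℝ f x₀ (Γ j k)))
    ↔ (∀ j k, Γ j k = Γ k j) := by
  constructor
  · rintro ⟨f, hf, hbij, heq⟩ j k
    have hs := (hf.contDiffAt (x := x₀)).isSymmSndFDerivAt (by rw [minSmoothness_of_isRCLikeNormedField]; exact WithTop.coe_le_coe.mpr (le_top : (2 : ℕ∞) ≤ ⊤))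
    have := (heq j k).symm.trans ((hs (Pi.single j 1) (Pi.single k 1)).trans (heq k j))
    exact hbij.injective (neg_inj.mp this)
  · intro hsymm
    refine ⟨fdef n Γ x₀, contDiff_fdef n Γ x₀, ?_, ?_⟩
    · have h := fderiv_fdef n Γ x₀ x₀
      simp only [sub_self, map_zero, add_zero] at h
      rw [h]
      exact Function.bijective_id
    · intro j k
      have h0 := fderiv_fdef n Γ x₀ x₀
      simp only [sub_self, map_zero, add_zero] at h0
      rw [fderiv_fderiv_fdef, h0]
      simp only [Mmap, ContinuousLinearMap.smul_apply, ContinuousLinearMap.add_apply,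
        ContinuousLinearMap.flip_apply, Bmap_single, ContinuousLinearMap.coe_id', id_eq]
      rw [← hsymm j k]
      module
end

section
/- Let n ≥ 1, x₀ ∈ ℝⁿ, let Γ : Fin n → (ℝⁿ → Matrix n ℝ) be smooth, and let A : ℝⁿ → Matrix n ℝ be smooth with A x₀ invertible and (Γ k x₀)·(A x₀) + fderiv ℝ A x₀ (e_k) = 0 for all k. Define the frame vector fields E_{i'} : ℝⁿ → ℝⁿ by (E_{i'} x) i := (A x) i i'. Then the Lie brackets [E_{i'}, E_{j'}] x₀ := fderiv ℝ E_{j'} x₀ (E_{i'} x₀) − fderiv ℝ E_{i'} x₀ (E_{j'} x₀) vanish for all i', j' if and only if (Γ k x₀) i l = (Γ l x₀) i k for all i, k, l. (A frame in which the components of a linear connection vanish at x₀ is holonomic at x₀ exactly when the torsion of the connection vanishes at x₀.) -/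
attribute [local instance] Matrix.normedAddCommGroup Matrix.normedSpace

/-- A frame (the columns of `A`) in which the components of a linear connection vanish at the
point `x₀` is holonomic at `x₀` (the frame fields commute at `x₀`) if and only if the torsion of
the connection vanishes at `x₀`. -/
theorem frame_vanishing_at_point_holonomic_iff_torsion_free
    (n : ℕ) (hn : 1 ≤ n) (x₀ : Fin n → ℝ)
    (Γ : Fin n → (Fin n → ℝ) → Matrix (Fin n) (Fin n) ℝ)
    (hΓ : ∀ k, ContDiff ℝ (⊤ : ℕ∞) (Γ k))
    (A : (Fin n → ℝ) → Matrix (Fin n) (Fin n) ℝ)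
    (hA : ContDiff ℝ (⊤ : ℕ∞) A) (hAunit : IsUnit (A x₀))
    (hvan : ∀ k, Γ k x₀ * A x₀ + fderiv ℝ A x₀ (Pi.single k 1) = 0)
    (E : Fin n → (Fin n → ℝ) → (Fin n → ℝ))
    (hEdef : ∀ i', E i' = fun x => fun i => A x i i') :
    (∀ i' j', fderiv ℝ (E j') x₀ (E i' x₀) - fderiv ℝ (E i') x₀ (E j' x₀) = 0)
    ↔ (∀ i k l, Γ k x₀ i l = Γ l x₀ i k) := by
  classical
  have hAd : DifferentiableAt ℝ A x₀ := (hA.differentiable (by simp)).differentiableAt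
  set D := fderiv ℝ A x₀ with hD
  set L : Fin n → (Matrix (Fin n) (Fin n) ℝ →L[ℝ] (Fin n → ℝ)) :=
    fun j' => ContinuousLinearMap.pi fun i =>
      (ContinuousLinearMap.proj (R := ℝ) (φ := fun _ : Fin n => ℝ) j').comp
        (ContinuousLinearMap.proj (R := ℝ) (φ := fun _ : Fin n => Fin n → ℝ) i) with hL
  have hE : ∀ j', E j' = fun x => L j' (A x) := by
    intro j'; rw [hEdef]; rfl
  have hfd : ∀ j', fderiv ℝ (E j') x₀ = (L j').comp D := by
    intro j'
    rw [hE j']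
    exact (((L j').hasFDerivAt).comp x₀ hAd.hasFDerivAt).fderiv
  have hDe : ∀ k, D (Pi.single k 1) = -(Γ k x₀ * A x₀) := by
    intro k
    exact eq_neg_of_add_eq_zero_right (hvan k)
  have hvrep : ∀ v : Fin n → ℝ, v = ∑ k, v k • (Pi.single k 1 : Fin n → ℝ) := by
    intro v
    ext j
    simp [Finset.sum_apply, Pi.single_apply, mul_ite]
  have hv : ∀ v : Fin n → ℝ, D v = ∑ k, v k • D (Pi.single k 1) := by
    intro v
    conv_lhs => rw [hvrep v]
    simp
  have hkey : ∀ i' j' i, fderiv ℝ (E j') x₀ (E i' x₀) i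
      = -∑ k, ∑ m, A x₀ k i' * (Γ k x₀ i m * A x₀ m j') := by
    intro i' j' i
    rw [hfd j']
    show D (E i' x₀) i j' = _
    rw [hv (E i' x₀)]
    simp only [hEdef, hDe, Matrix.sum_apply, Matrix.smul_apply, Matrix.neg_apply,
      Matrix.mul_apply, smul_eq_mul, mul_neg, neg_mul, Finset.mul_sum,
      Finset.sum_neg_distrib]
  constructor
  · intro H i k l
    set M : Matrix (Fin n) (Fin n) ℝ := fun k m => Γ m x₀ i k - Γ k x₀ i m with hM
    have hzero : (A x₀).transpose * M * A x₀ = 0 := by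
      ext i' j'
      have h := congrFun (H i' j') i
      rw [Pi.sub_apply, Pi.zero_apply, hkey i' j' i, hkey j' i' i] at h
      have h' : ∑ k, ∑ m, A x₀ k j' * (Γ k x₀ i m * A x₀ m i')
          = ∑ k, ∑ m, A x₀ k i' * (Γ k x₀ i m * A x₀ m j') := by linarith
      have hswap : ∑ k, ∑ m, A x₀ k i' * (Γ m x₀ i k * A x₀ m j')
          = ∑ k, ∑ m, A x₀ k j' * (Γ k x₀ i m * A x₀ m i') := by
        rw [Finset.sum_comm]
        apply Finset.sum_congr rfl; intro k _
        apply Finset.sum_congr rfl; intro m _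
        ring
      simp only [Matrix.mul_apply, Matrix.transpose_apply, Matrix.zero_apply,
        Finset.sum_mul, Finset.mul_sum]
      simp only [hM]
      rw [Finset.sum_comm]
      calc ∑ k, ∑ m, A x₀ k i' * (Γ m x₀ i k - Γ k x₀ i m) * A x₀ m j'
          = (∑ k, ∑ m, A x₀ k i' * (Γ m x₀ i k * A x₀ m j'))
            - ∑ k, ∑ m, A x₀ k i' * (Γ k x₀ i m * A x₀ m j') := by
            rw [← Finset.sum_sub_distrib]
            apply Finset.sum_congr rfl; intro k _
            rw [← Finset.sum_sub_distrib]
            apply Finset.sum_congr rfl; intro m _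
            ring
        _ = 0 := by rw [hswap, h']; ring
    have hdet : IsUnit (A x₀).det := (Matrix.isUnit_iff_isUnit_det _).mp hAunit
    have hdetT : IsUnit ((A x₀).transpose).det := by rwa [Matrix.det_transpose]
    have hM0 : M = 0 := by
      calc M = ((A x₀).transpose⁻¹ * (A x₀).transpose) * M * (A x₀ * (A x₀)⁻¹) := by
            rw [Matrix.nonsing_inv_mul _ hdetT, Matrix.mul_nonsing_inv _ hdet,
              Matrix.one_mul, Matrix.mul_one]
        _ = (A x₀).transpose⁻¹ * ((A x₀).transpose * M * A x₀) * (A x₀)⁻¹ := by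
            simp only [Matrix.mul_assoc]
        _ = 0 := by rw [hzero]; simp
    have hMe := congrFun (congrFun hM0 l) k
    simp only [hM, Matrix.zero_apply] at hMe
    linarith
  · intro hsym i' j'
    ext i
    rw [Pi.sub_apply, Pi.zero_apply, hkey i' j' i, hkey j' i' i]
    have h : ∑ k, ∑ m, A x₀ k i' * (Γ k x₀ i m * A x₀ m j')
        = ∑ k, ∑ m, A x₀ k j' * (Γ k x₀ i m * A x₀ m i') := by
      rw [Finset.sum_comm]
      apply Finset.sum_congr rfl; intro k _
      apply Finset.sum_congr rfl; intro m _
      rw [hsym i m k]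
      ring
    rw [h]; ring
end

section
/- Let n ≥ 1, x₀ ∈ ℝⁿ, and let Γ : Fin n → Fin n → ℝⁿ be given (Γ j k ∈ ℝⁿ is the vector with components Γ^i_{jk}(x₀)). Then there exists a smooth map f : ℝⁿ → ℝⁿ with fderiv ℝ f x₀ invertible such that fderiv ℝ (fun x => fderiv ℝ f x) x₀ (e_j) (e_k) = −(fderiv ℝ f x₀) ((1/2) • (Γ j k + Γ k j)) for all j, k. (Even when a linear connection has nonzero torsion, there exist local holonomic frames — normal coordinates — in which the symmetric part of the connection's components vanishes at any given point.) -/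
attribute [local instance] Matrix.normedAddCommGroup Matrix.normedSpace

set_option maxHeartbeats 1000000
set_option synthInstance.maxHeartbeats 400000

/-- Even for a connection with torsion, there exist local coordinates (normal coordinates, a
holonomic frame) in which the symmetric part `½(Γ_{jk} + Γ_{kj})` of the connection's components
vanishes at a given point `x₀`. -/
theorem exists_normal_coordinates_killing_symmetric_part
    (n : ℕ) (hn : 1 ≤ n) (x₀ : Fin n → ℝ)
    (Γ : Fin n → Fin n → (Fin n → ℝ)) :
    ∃ f : (Fin n → ℝ) → (Fin n → ℝ),
      ContDiff ℝ (⊤ : ℕ∞) f ∧ Function.Bijective (fderiv ℝ f x₀) ∧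
      ∀ j k, fderiv ℝ (fun x => fderiv ℝ f x) x₀ (Pi.single j 1) (Pi.single k 1)
        = -(fderiv ℝ f x₀ ((1/2 : ℝ) • (Γ j k + Γ k j))) := by
  classical
  let B : (Fin n → ℝ) →L[ℝ] (Fin n → ℝ) →L[ℝ] (Fin n → ℝ) :=
    ∑ j, ∑ k, (ContinuousLinearMap.proj j).smulRight
      ((ContinuousLinearMap.proj (R := ℝ) (φ := fun _ : Fin n => ℝ) k).smulRight (Γ j k))
  have hBapply : ∀ j k, B (Pi.single j 1) (Pi.single k 1) = Γ j k := by
    intro j k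
    simp only [B, ContinuousLinearMap.sum_apply, ContinuousLinearMap.smulRight_apply,
      ContinuousLinearMap.smul_apply, ContinuousLinearMap.proj_apply, Pi.single_apply,
      ite_smul, zero_smul, one_smul, smul_ite, smul_zero]
    simp [apply_ite (fun g : (Fin n → ℝ) →L[ℝ] (Fin n → ℝ) => g (Pi.single k 1)),
      Pi.single_apply, ite_smul, Finset.sum_ite_eq', Finset.sum_ite_eq]
  let M : (Fin n → ℝ) →L[ℝ] (Fin n → ℝ) →L[ℝ] (Fin n → ℝ) := (1/2 : ℝ) • (B + B.flip)
  let f : (Fin n → ℝ) → (Fin n → ℝ) := fun x => x - (1/2 : ℝ) • B (x - x₀) (x - x₀)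
  have hq : ∀ x : Fin n → ℝ, HasFDerivAt (fun x : Fin n → ℝ => B (x - x₀) (x - x₀))
      (B (x - x₀) + B.flip (x - x₀)) x := by
    intro x
    have h1 : HasFDerivAt (fun x : Fin n → ℝ => (x - x₀, x - x₀))
        ((ContinuousLinearMap.id ℝ (Fin n → ℝ)).prod (ContinuousLinearMap.id ℝ (Fin n → ℝ))) x :=
      (HasFDerivAt.prodMk ((hasFDerivAt_id x).sub_const x₀) ((hasFDerivAt_id x).sub_const x₀))
    have h2 := (B.isBoundedBilinearMap.hasFDerivAt (x - x₀, x - x₀)).comp x h1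
    have heq : (B.isBoundedBilinearMap.deriv (x - x₀, x - x₀)).comp
        ((ContinuousLinearMap.id ℝ (Fin n → ℝ)).prod (ContinuousLinearMap.id ℝ (Fin n → ℝ)))
        = B (x - x₀) + B.flip (x - x₀) := by
      ext v
      simp [IsBoundedBilinearMap.deriv]
    rwa [heq] at h2
  have hf' : ∀ x : Fin n → ℝ,
      HasFDerivAt f (ContinuousLinearMap.id ℝ (Fin n → ℝ) - M (x - x₀)) x := by
    intro x
    have h := (hasFDerivAt_id x).sub ((hq x).const_smul (1/2 : ℝ))
    have heq : ContinuousLinearMap.id ℝ (Fin n → ℝ)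
        - (1/2 : ℝ) • (B (x - x₀) + B.flip (x - x₀))
        = ContinuousLinearMap.id ℝ (Fin n → ℝ) - M (x - x₀) := by
      ext v
      simp [M, smul_add]
    rwa [heq] at h
  have hfd : ∀ x : Fin n → ℝ,
      fderiv ℝ f x = ContinuousLinearMap.id ℝ (Fin n → ℝ) - M (x - x₀) :=
    fun x => (hf' x).fderiv
  have hfd0 : fderiv ℝ f x₀ = ContinuousLinearMap.id ℝ (Fin n → ℝ) := by
    simp [hfd x₀]
  refine ⟨f, ?_, ?_, ?_⟩
  · exact contDiff_id.sub ((B.isBoundedBilinearMap.contDiff.comp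
      (ContDiff.prodMk ((contDiff_id.sub contDiff_const)) ((contDiff_id.sub contDiff_const)))).const_smul _)
  · rw [hfd0]; exact Function.bijective_id
  · intro j k
    have hFun : (fun x => fderiv ℝ f x)
        = fun x : Fin n → ℝ => ContinuousLinearMap.id ℝ (Fin n → ℝ) - M (x - x₀) := funext hfd
    have hM : HasFDerivAt
        (fun x : Fin n → ℝ => ContinuousLinearMap.id ℝ (Fin n → ℝ) - M (x - x₀)) (-M) x₀ := by
      have h := (hasFDerivAt_const (ContinuousLinearMap.id ℝ (Fin n → ℝ)) x₀).sub
        (M.hasFDerivAt.comp x₀ ((hasFDerivAt_id x₀).sub_const x₀))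
      have : (0 : (Fin n → ℝ) →L[ℝ] ((Fin n → ℝ) →L[ℝ] (Fin n → ℝ)))
          - M.comp (ContinuousLinearMap.id ℝ (Fin n → ℝ)) = -M := by
        ext v w
        simp
      rwa [this] at h
    rw [hFun, hM.fderiv, hfd0]
    have hMval : M (Pi.single j 1) (Pi.single k 1) = (1/2 : ℝ) • (Γ j k + Γ k j) := by
      simp [M, ContinuousLinearMap.smul_apply, ContinuousLinearMap.add_apply,
        ContinuousLinearMap.flip_apply, hBapply]
    simp [hMval]
end
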